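/- Consider the constant-product AMM with reserves b₀, b₁ > 0 whose mempool contains exactly one honest transaction tx sending v > 0 units of τ₀ with minimum-output constraint vmin = 0 (and the honest sender owns v units of τ₀). Then for every ε > 0 there is a list of moves tr with gainMoves σ tr + ε ≥ extractable(σ) + v·pr₀; consequently MEVsup σ (extractable(σ) + v·pr₀) holds while MEV does not exist at σ. The witnessing trace, parameterised by x > 0, is: balance the AMM, adversary-swap x units of τ₀ in, execute tx, then re-balance; its gain is extractable(σ) + pr₀·v − pr₁·b̄₀·b̄₁·v / ((b̄₀+x+v)·(b̄₀+x)), where (b̄₀, b̄₁) are the balanced reserves, and this tends to extractable(σ) + pr₀·v as x → ∞. -/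

import Mathlib

open scoped NNReal

/-! A constant-product AMM over two token types τ₀, τ₁ with fixed positive
prices pr₀, pr₁. A swap sending `v > 0` units of token τ returns
`v · r' / (r + v)` units of the other token, where `r`, `r'` are the input and
output reserves, so the product of reserves is invariant. Honest swaps come
from the mempool and carry a minimum-output constraint `vmin`; the adversary
(with unbounded funds) can craft arbitrary swaps. -/

inductive Participant where
  | Hon : String → Participant
  | Adv : Participant
deriving DecidableEq

inductive Token where
  | τ₀ : Token
  | τ₁ : Token
deriving DecidableEq

/-- The other token type. -/
def Token.other : Token → Token
  | .τ₀ => .τ₁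
  | .τ₁ => .τ₀

abbrev TxId := ℕ

/-- A `swap` transaction: participant `P` sends `v > 0` units of token `τ`,
requiring at least `vmin` units of the other token in exchange. -/
structure Tx where
  P : Participant
  v : ℝ
  v_pos : 0 < v
  τ : Token
  vmin : ℝ

/-- The honest part of the system state: AMM reserves `bal`, cumulative honest
wallet `wal`, and the mempool. -/
structure AMMState where
  bal : Token → ℝ≥0
  wal : Token → ℝ≥0
  mempool : List (TxId × Tx)

/-- System state: adversary wallet plus honest state. -/
structure AMMSys where
  Δ : Token → ℝ
  s : AMMState

/-- Semantics of a swap of `v` units of `τin` by `P` with minimum output `vmin`. -/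
noncomputable def swapSem (P : Participant) (v : ℝ) (τin : Token) (vmin : ℝ)
    (σ : AMMSys) : Option AMMSys :=
  let τout := τin.other
  let rin : ℝ := σ.s.bal τin
  let rout : ℝ := σ.s.bal τout
  let x : ℝ := v * rout / (rin + v)
  if 0 < v ∧ (P = .Adv ∨ v ≤ (σ.s.wal τin : ℝ)) ∧ vmin ≤ x ∧ x < rout then
    some { Δ := if P = .Adv
                then fun τ => σ.Δ τ + (if τ = τout then x else 0)
                                    - (if τ = τin then v else 0)
                else σ.Δ
         , s := { bal := fun τ => if τ = τin then σ.s.bal τin + v.toNNReal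
                                  else σ.s.bal τout - x.toNNReal
                , wal := if P = .Adv then σ.s.wal
                         else fun τ => σ.s.wal τ + (if τ = τout then x.toNNReal else 0)
                                               - (if τ = τin then v.toNNReal else 0)
                , mempool := σ.s.mempool } }
  else none

/-- Adversarial moves: craft an adversary-signed swap, or execute a mempool
transaction. -/
inductive Move where
  | adv : (v : ℝ) → 0 < v → (τ : Token) → (vmin : ℝ) → Move
  | mempool : TxId → Move

/-- Semantics of adversarial moves. A successfully executed mempool transaction
is removed from the mempool. -/
noncomputable def semMove (σ : AMMSys) : Move → Option AMMSys
  | .adv v _ τ vmin => swapSem .Adv v τ vmin σ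
  | .mempool id =>
    match σ.s.mempool.find? (fun p => p.1 == id) with
    | none => none
    | some (_, tx) =>
      match swapSem tx.P tx.v tx.τ tx.vmin σ with
      | none => none
      | some σ' =>
        some { Δ := σ'.Δ
             , s := { bal := σ'.s.bal, wal := σ'.s.wal
                    , mempool := σ.s.mempool.filter (fun p => p.1 != id) } }

/-- Composed effect of a list of moves (failing moves are skipped). -/
noncomputable def semMoves (σ : AMMSys) : List Move → AMMSys
  | [] => σ
  | m :: ms =>
    match semMove σ m with
    | none => semMoves σ ms
    | some σ' => semMoves σ' ms

/-- Adversarial gain of a list of moves, at token prices `pr₀`, `pr₁`. -/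
noncomputable def gainMoves (pr₀ pr₁ : ℝ) (σ : AMMSys) (tr : List Move) : ℝ :=
  pr₀ * ((semMoves σ tr).Δ .τ₀ - σ.Δ .τ₀) + pr₁ * ((semMoves σ tr).Δ .τ₁ - σ.Δ .τ₁)

/-- Maximal extractable value. -/
structure MEV (pr₀ pr₁ : ℝ) (σ : AMMSys) (v : ℝ) : Prop where
  trace_reaches_v : ∃ tr, gainMoves pr₀ pr₁ σ tr = v
  other_traces_worse : ∀ tr, gainMoves pr₀ pr₁ σ tr ≤ v

/-- Least upper bound of the extractable values. -/
structure MEVsup (pr₀ pr₁ : ℝ) (σ : AMMSys) (v : ℝ) : Prop where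
  traces_approx : ∀ ε : ℝ, 0 < ε → ∃ tr, v ≤ gainMoves pr₀ pr₁ σ tr + ε
  other_traces_worse : ∀ tr, gainMoves pr₀ pr₁ σ tr ≤ v

/-- Value extractable by rebalancing the AMM (arbitrage). -/
noncomputable def extractable (pr₀ pr₁ : ℝ) (σ : AMMSys) : ℝ :=
  (Real.sqrt (pr₀ * (σ.s.bal .τ₀ : ℝ)) - Real.sqrt (pr₁ * (σ.s.bal .τ₁ : ℝ)))^2

/-!
Call the adversary's wallet value plus the extractable value the potential of a state. Since
`extractable = pr₀ b₀ + pr₁ b₁ - 2 √(pr₀ pr₁ b₀ b₁)` and every swap preserves `b₀ b₁`, an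
adversary swap, which only moves tokens between the wallet and the reserves, leaves the potential
unchanged, whereas the honest swap raises it by `pr₀ v - pr₁ y`, where `y > 0` is its output. The
honest swap runs at most once, so every trace gains strictly less than `extractable σ + pr₀ v`.
Conversely, front-running to the reserves `(b̄₀ + x, b̄₀ b̄₁ / (b̄₀ + x))`, executing the honest
swap and back-running to the balanced state gains exactly `extractable σ + pr₀ v - pr₁ y`, and
`y → 0` as `x → ∞`.
-/

namespace Token

lemma other_ne (τ : Token) : τ.other ≠ τ := by cases τ <;> decide

lemma eq_or_eq_other (τ τ' : Token) : τ' = τ ∨ τ' = τ.other := by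
  cases τ <;> cases τ' <;> decide

end Token

noncomputable def swapOut (v : ℝ) (τin : Token) (σ : AMMSys) : ℝ :=
  v * σ.s.bal τin.other / (σ.s.bal τin + v)

section Swap

variable {P : Participant} {v vmin : ℝ} {τin : Token} {σ σ' : AMMSys}

lemma swapOut_nonneg (hv : 0 ≤ v) : 0 ≤ swapOut v τin σ := by
  unfold swapOut; positivity

lemma swapSem_ne_none (hv : 0 < v) (hP : P = .Adv ∨ v ≤ σ.s.wal τin)
    (hmin : vmin ≤ swapOut v τin σ) (hin : (0 : ℝ) < σ.s.bal τin)
    (hout : (0 : ℝ) < σ.s.bal τin.other) : swapSem P v τin vmin σ ≠ none := by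
  have hlt : swapOut v τin σ < σ.s.bal τin.other := by
    unfold swapOut
    rw [div_lt_iff₀ (by positivity)]
    nlinarith [mul_pos hout hin]
  unfold swapSem
  rw [if_pos ⟨hv, hP, hmin, hlt⟩]
  exact Option.some_ne_none _

lemma guard_of_swapSem_eq_some (h : swapSem P v τin vmin σ = some σ') :
    0 < v ∧ (P = .Adv ∨ v ≤ σ.s.wal τin) ∧ vmin ≤ swapOut v τin σ ∧
      swapOut v τin σ < σ.s.bal τin.other := by
  unfold swapSem at h
  exact (Option.ite_none_right_eq_some.mp h).1

lemma swapSem_bal_self (h : swapSem P v τin vmin σ = some σ') :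
    (σ'.s.bal τin : ℝ) = σ.s.bal τin + v := by
  have hv := (guard_of_swapSem_eq_some h).1
  unfold swapSem at h
  obtain ⟨-, ⟨⟩⟩ := Option.ite_none_right_eq_some.mp h
  simp [hv.le]

lemma swapSem_bal_other (h : swapSem P v τin vmin σ = some σ') :
    (σ'.s.bal τin.other : ℝ) = σ.s.bal τin.other - swapOut v τin σ := by
  obtain ⟨hv, -, -, hlt⟩ := guard_of_swapSem_eq_some h
  unfold swapSem at h
  obtain ⟨-, ⟨⟩⟩ := Option.ite_none_right_eq_some.mp h
  simp only [if_neg τin.other_ne]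
  exact (NNReal.coe_sub (Real.toNNReal_le_iff_le_coe.mpr hlt.le)).trans
    (congrArg _ (Real.coe_toNNReal _ (swapOut_nonneg hv.le)))

lemma swapSem_mempool (h : swapSem P v τin vmin σ = some σ') :
    σ'.s.mempool = σ.s.mempool := by
  unfold swapSem at h
  obtain ⟨-, ⟨⟩⟩ := Option.ite_none_right_eq_some.mp h
  rfl

lemma swapSem_wal_of_adv (h : swapSem .Adv v τin vmin σ = some σ') :
    σ'.s.wal = σ.s.wal := by
  unfold swapSem at h
  obtain ⟨-, ⟨⟩⟩ := Option.ite_none_right_eq_some.mp h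
  rfl

lemma swapSem_Δ_of_ne_adv (hP : P ≠ .Adv) (h : swapSem P v τin vmin σ = some σ') :
    σ'.Δ = σ.Δ := by
  unfold swapSem at h
  obtain ⟨-, ⟨⟩⟩ := Option.ite_none_right_eq_some.mp h
  simp [hP]

lemma swapSem_Δ_add_bal_of_adv (h : swapSem .Adv v τin vmin σ = some σ') (τ : Token) :
    σ'.Δ τ + σ'.s.bal τ = σ.Δ τ + σ.s.bal τ := by
  rcases τin.eq_or_eq_other τ with rfl | rfl
  · rw [swapSem_bal_self h]
    unfold swapSem at h
    obtain ⟨-, ⟨⟩⟩ := Option.ite_none_right_eq_some.mp h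
    simp [τ.other_ne.symm]
  · rw [swapSem_bal_other h]
    unfold swapSem at h
    obtain ⟨-, ⟨⟩⟩ := Option.ite_none_right_eq_some.mp h
    simp [τin.other_ne, swapOut]

lemma swapOut_pos_of_swapSem (h : swapSem P v τin vmin σ = some σ') : 0 < swapOut v τin σ := by
  obtain ⟨hv, -, -, hlt⟩ := guard_of_swapSem_eq_some h
  have hout : (0 : ℝ) < σ.s.bal τin.other := (swapOut_nonneg hv.le).trans_lt hlt
  unfold swapOut
  positivity

lemma swapSem_bal_mul (h : swapSem P v τin vmin σ = some σ') :
    (σ'.s.bal .τ₀ : ℝ) * σ'.s.bal .τ₁ = σ.s.bal .τ₀ * σ.s.bal .τ₁ := by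
  have hv := (guard_of_swapSem_eq_some h).1
  have hne : (σ.s.bal τin : ℝ) + v ≠ 0 := by positivity
  have key : (σ'.s.bal τin : ℝ) * σ'.s.bal τin.other = σ.s.bal τin * σ.s.bal τin.other := by
    rw [swapSem_bal_self h, swapSem_bal_other h, swapOut]
    field_simp
    ring
  cases τin
  · exact key
  · simpa only [Token.other, mul_comm] using key

lemma swapSem_bal_pos (h : swapSem P v τin vmin σ = some σ') (τ : Token) :
    (0 : ℝ) < σ'.s.bal τ := by
  obtain ⟨hv, -, -, hlt⟩ := guard_of_swapSem_eq_some h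
  rcases τin.eq_or_eq_other τ with rfl | rfl
  · rw [swapSem_bal_self h]
    positivity
  · rw [swapSem_bal_other h]
    exact sub_pos.2 hlt

end Swap

noncomputable def walletValue (pr₀ pr₁ : ℝ) (Δ : Token → ℝ) : ℝ :=
  pr₀ * Δ .τ₀ + pr₁ * Δ .τ₁

noncomputable def potential (pr₀ pr₁ : ℝ) (σ : AMMSys) : ℝ :=
  walletValue pr₀ pr₁ σ.Δ + extractable pr₀ pr₁ σ

section Potential

variable {pr₀ pr₁ : ℝ} {σ σ' : AMMSys}

lemma gainMoves_eq (tr : List Move) :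
    gainMoves pr₀ pr₁ σ tr
      = potential pr₀ pr₁ (semMoves σ tr) - extractable pr₀ pr₁ (semMoves σ tr)
        - (potential pr₀ pr₁ σ - extractable pr₀ pr₁ σ) := by
  unfold gainMoves potential walletValue
  ring

lemma extractable_eq (hpr₀ : 0 ≤ pr₀) (hpr₁ : 0 ≤ pr₁) (σ : AMMSys) :
    extractable pr₀ pr₁ σ = pr₀ * σ.s.bal .τ₀ + pr₁ * σ.s.bal .τ₁
      - 2 * √(pr₀ * pr₁ * (σ.s.bal .τ₀ * σ.s.bal .τ₁)) := by
  have h₀ : 0 ≤ pr₀ * (σ.s.bal .τ₀ : ℝ) := by positivity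
  have h₁ : 0 ≤ pr₁ * (σ.s.bal .τ₁ : ℝ) := by positivity
  rw [extractable, sub_sq, Real.sq_sqrt h₀, Real.sq_sqrt h₁, mul_assoc 2, ← Real.sqrt_mul h₀]
  ring_nf

lemma extractable_nonneg (pr₀ pr₁ : ℝ) (σ : AMMSys) : 0 ≤ extractable pr₀ pr₁ σ :=
  sq_nonneg _

lemma extractable_eq_zero (h : pr₀ * σ.s.bal .τ₀ = pr₁ * σ.s.bal .τ₁) :
    extractable pr₀ pr₁ σ = 0 := by
  rw [extractable, h, sub_self, zero_pow two_ne_zero]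

lemma potential_eq (hpr₀ : 0 ≤ pr₀) (hpr₁ : 0 ≤ pr₁) (σ : AMMSys) :
    potential pr₀ pr₁ σ = pr₀ * (σ.Δ .τ₀ + σ.s.bal .τ₀) + pr₁ * (σ.Δ .τ₁ + σ.s.bal .τ₁)
      - 2 * √(pr₀ * pr₁ * (σ.s.bal .τ₀ * σ.s.bal .τ₁)) := by
  rw [potential, walletValue, extractable_eq hpr₀ hpr₁]
  ring

lemma potential_congr (hΔ : σ'.Δ = σ.Δ) (hbal : σ'.s.bal = σ.s.bal) :
    potential pr₀ pr₁ σ' = potential pr₀ pr₁ σ := by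
  rw [potential, potential, extractable, extractable, hΔ, hbal]

lemma potential_swapSem_adv (hpr₀ : 0 ≤ pr₀) (hpr₁ : 0 ≤ pr₁) {v vmin : ℝ} {τin : Token}
    (h : swapSem .Adv v τin vmin σ = some σ') : potential pr₀ pr₁ σ' = potential pr₀ pr₁ σ := by
  rw [potential_eq hpr₀ hpr₁, potential_eq hpr₀ hpr₁, swapSem_Δ_add_bal_of_adv h,
    swapSem_Δ_add_bal_of_adv h, swapSem_bal_mul h]

lemma potential_swapSem_of_ne_adv (hpr₀ : 0 ≤ pr₀) (hpr₁ : 0 ≤ pr₁) {P : Participant}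
    {v vmin : ℝ} (hP : P ≠ .Adv) (h : swapSem P v .τ₀ vmin σ = some σ') :
    potential pr₀ pr₁ σ' = potential pr₀ pr₁ σ + pr₀ * v - pr₁ * swapOut v .τ₀ σ := by
  rw [potential_eq hpr₀ hpr₁, potential_eq hpr₀ hpr₁, swapSem_Δ_of_ne_adv hP h,
    swapSem_bal_mul h, swapSem_bal_self h, show Token.τ₁ = Token.τ₀.other from rfl,
    swapSem_bal_other h]
  ring

end Potential

section Moves

variable {σ σ' : AMMSys} {m : Move} {ms : List Move}

lemma semMoves_cons_of_semMove_eq_some (h : semMove σ m = some σ') :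
    semMoves σ (m :: ms) = semMoves σ' ms := by
  rw [semMoves, h]

lemma semMoves_cons_of_semMove_eq_none (h : semMove σ m = none) :
    semMoves σ (m :: ms) = semMoves σ ms := by
  rw [semMoves, h]

lemma semMoves_adv_singleton {v vmin : ℝ} (hv : 0 < v) {τ : Token}
    (h : swapSem .Adv v τ vmin σ = some σ') : semMoves σ [.adv v hv τ vmin] = σ' :=
  semMoves_cons_of_semMove_eq_some h

lemma semMove_mempool_of_mempool_eq_nil (h : σ.s.mempool = []) (i : TxId) :
    semMove σ (.mempool i) = none := by
  simp [semMove, h]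

lemma semMove_mempool_of_mempool_eq_singleton {id i : TxId} {tx : Tx} {σ'' : AMMSys}
    (hmp : σ.s.mempool = [(id, tx)]) (h : semMove σ (.mempool i) = some σ'') :
    ∃ σ', swapSem tx.P tx.v tx.τ tx.vmin σ = some σ' ∧
      σ''.Δ = σ'.Δ ∧ σ''.s.bal = σ'.s.bal ∧ σ''.s.mempool = [] := by
  by_cases hi : id = i
  · subst hi
    cases hsw : swapSem tx.P tx.v tx.τ tx.vmin σ with
    | none => simp [semMove, hmp, hsw] at h
    | some σ' =>
      simp only [semMove, hmp, hsw, List.find?_cons, beq_self_eq_true] at h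
      cases h
      exact ⟨σ', rfl, rfl, rfl, by simp⟩
  · simp [semMove, hmp, hi] at h

lemma semMove_mempool_eq_some {id : TxId} {tx : Tx} (hmp : σ.s.mempool = [(id, tx)])
    (h : swapSem tx.P tx.v tx.τ tx.vmin σ = some σ') :
    semMove σ (.mempool id) = some ⟨σ'.Δ, ⟨σ'.s.bal, σ'.s.wal, []⟩⟩ := by
  simp [semMove, hmp, h]

lemma semMoves_append (σ : AMMSys) (tr₁ tr₂ : List Move) :
    semMoves σ (tr₁ ++ tr₂) = semMoves (semMoves σ tr₁) tr₂ := by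
  induction tr₁ generalizing σ with
  | nil => rfl
  | cons m tr₁ ih =>
    cases h : semMove σ m with
    | none =>
      rw [List.cons_append, semMoves_cons_of_semMove_eq_none h,
        semMoves_cons_of_semMove_eq_none h, ih]
    | some σ' =>
      rw [List.cons_append, semMoves_cons_of_semMove_eq_some h,
        semMoves_cons_of_semMove_eq_some h, ih]

end Moves

section UpperBound

variable {pr₀ pr₁ : ℝ}

lemma exists_semMoves_adv_cons (hpr₀ : 0 ≤ pr₀) (hpr₁ : 0 ≤ pr₁) (σ : AMMSys) {v vmin : ℝ}
    (hv : 0 < v) (τ : Token) (tr : List Move) :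
    ∃ σ', semMoves σ (.adv v hv τ vmin :: tr) = semMoves σ' tr ∧
      potential pr₀ pr₁ σ' = potential pr₀ pr₁ σ ∧ σ'.s.mempool = σ.s.mempool := by
  cases h : swapSem .Adv v τ vmin σ with
  | none => exact ⟨σ, semMoves_cons_of_semMove_eq_none h, rfl, rfl⟩
  | some σ' =>
    exact ⟨σ', semMoves_cons_of_semMove_eq_some h, potential_swapSem_adv hpr₀ hpr₁ h,
      swapSem_mempool h⟩

lemma potential_semMoves_of_mempool_eq_nil (hpr₀ : 0 ≤ pr₀) (hpr₁ : 0 ≤ pr₁) {σ : AMMSys}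
    (hmp : σ.s.mempool = []) (tr : List Move) :
    potential pr₀ pr₁ (semMoves σ tr) = potential pr₀ pr₁ σ := by
  induction tr generalizing σ with
  | nil => rfl
  | cons m tr ih =>
    cases m with
    | adv v hv τ vmin =>
      obtain ⟨σ', htr, hpot, hmp'⟩ := exists_semMoves_adv_cons hpr₀ hpr₁ σ (vmin := vmin) hv τ tr
      rw [htr, ih (hmp'.trans hmp), hpot]
    | mempool i =>
      rw [semMoves_cons_of_semMove_eq_none (semMove_mempool_of_mempool_eq_nil hmp i)]
      exact ih hmp

lemma potential_semMoves_lt (hpr₀ : 0 < pr₀) (hpr₁ : 0 < pr₁) {id : TxId} {tx : Tx}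
    (hτ : tx.τ = .τ₀) (hhon : tx.P ≠ .Adv) {σ : AMMSys} (hmp : σ.s.mempool = [(id, tx)])
    (tr : List Move) :
    potential pr₀ pr₁ (semMoves σ tr) < potential pr₀ pr₁ σ + pr₀ * tx.v := by
  induction tr generalizing σ with
  | nil => exact lt_add_of_pos_right _ (mul_pos hpr₀ tx.v_pos)
  | cons m tr ih =>
    cases m with
    | adv v hv τ vmin =>
      obtain ⟨σ', htr, hpot, hmp'⟩ :=
        exists_semMoves_adv_cons hpr₀.le hpr₁.le σ (vmin := vmin) hv τ tr
      rw [htr, ← hpot]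
      exact ih (hmp'.trans hmp)
    | mempool i =>
      cases hm : semMove σ (.mempool i) with
      | none =>
        rw [semMoves_cons_of_semMove_eq_none hm]
        exact ih hmp
      | some σ'' =>
        obtain ⟨σ', hsw, hΔ, hbal, hnil⟩ := semMove_mempool_of_mempool_eq_singleton hmp hm
        rw [hτ] at hsw
        rw [semMoves_cons_of_semMove_eq_some hm,
          potential_semMoves_of_mempool_eq_nil hpr₀.le hpr₁.le hnil, potential_congr hΔ hbal,
          potential_swapSem_of_ne_adv hpr₀.le hpr₁.le hhon hsw]
        linarith [mul_pos hpr₁ (swapOut_pos_of_swapSem hsw)]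

lemma gainMoves_lt (hpr₀ : 0 < pr₀) (hpr₁ : 0 < pr₁) {id : TxId} {tx : Tx}
    (hτ : tx.τ = .τ₀) (hhon : tx.P ≠ .Adv) {σ : AMMSys} (hmp : σ.s.mempool = [(id, tx)])
    (tr : List Move) :
    gainMoves pr₀ pr₁ σ tr < extractable pr₀ pr₁ σ + tx.v * pr₀ := by
  rw [gainMoves_eq]
  linarith [potential_semMoves_lt hpr₀ hpr₁ hτ hhon hmp tr,
    extractable_nonneg pr₀ pr₁ (semMoves σ tr)]

end UpperBound

lemma Real.mul_sqrt_div_self {p : ℝ} (hp : 0 < p) (c : ℝ) : p * √(c / p) = √(p * c) := by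
  rw [← Real.sqrt_sq hp.le, ← Real.sqrt_mul (sq_nonneg p), Real.sqrt_sq hp.le]
  congr 1
  field_simp

lemma mul_sqrt_balanced_comm {p q : ℝ} (hp : 0 < p) (hq : 0 < q) (a b : ℝ) :
    p * √(q * a * b / p) = q * √(p * a * b / q) := by
  rw [Real.mul_sqrt_div_self hp, Real.mul_sqrt_div_self hq]
  ring_nf

lemma sqrt_balanced_mul_sqrt_balanced {p q a b : ℝ} (hp : 0 < p) (hq : 0 < q) (hab : 0 ≤ a * b) :
    √(q * a * b / p) * √(p * a * b / q) = a * b := by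
  have hqab : 0 ≤ q * a * b / p := by rw [mul_assoc]; positivity
  rw [← Real.sqrt_mul hqab, ← Real.sqrt_sq hab]
  congr 1
  field_simp

section Rebalance

variable {pr₀ pr₁ : ℝ}

lemma exists_swapSem_adv_bal_eq {σ : AMMSys} {τ : Token} {B B' : ℝ}
    (hin : (0 : ℝ) < σ.s.bal τ) (hout : (0 : ℝ) < σ.s.bal τ.other) (hB : (σ.s.bal τ : ℝ) < B)
    (hprod : B * B' = σ.s.bal τ * σ.s.bal τ.other) :
    ∃ σ', swapSem .Adv (B - σ.s.bal τ) τ 0 σ = some σ' ∧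
      (σ'.s.bal τ : ℝ) = B ∧ (σ'.s.bal τ.other : ℝ) = B' := by
  have hv : 0 < B - σ.s.bal τ := sub_pos.2 hB
  obtain ⟨σ', h⟩ := Option.ne_none_iff_exists'.mp
    (swapSem_ne_none hv (Or.inl rfl) (swapOut_nonneg hv.le) hin hout)
  refine ⟨σ', h, by rw [swapSem_bal_self h]; ring, ?_⟩
  have hB₀ : B ≠ 0 := (hin.trans hB).ne'
  rw [swapSem_bal_other h, swapOut, add_sub_cancel]
  field_simp
  linear_combination -hprod

lemma exists_semMoves_bal_eq (hpr₀ : 0 ≤ pr₀) (hpr₁ : 0 ≤ pr₁) (σ : AMMSys)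
    (hb₀ : (0 : ℝ) < σ.s.bal .τ₀) (hb₁ : (0 : ℝ) < σ.s.bal .τ₁) {B₀ B₁ : ℝ} (hB₀ : 0 < B₀)
    (hprod : B₀ * B₁ = σ.s.bal .τ₀ * σ.s.bal .τ₁) :
    ∃ tr, ((semMoves σ tr).s.bal .τ₀ : ℝ) = B₀ ∧ ((semMoves σ tr).s.bal .τ₁ : ℝ) = B₁ ∧
      potential pr₀ pr₁ (semMoves σ tr) = potential pr₀ pr₁ σ ∧
      (semMoves σ tr).s.mempool = σ.s.mempool ∧ (semMoves σ tr).s.wal = σ.s.wal := by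
  rcases lt_trichotomy (σ.s.bal .τ₀ : ℝ) B₀ with h | h | h
  · obtain ⟨σ', hsw, h₀, h₁⟩ := exists_swapSem_adv_bal_eq hb₀ hb₁ h hprod
    refine ⟨[.adv _ (sub_pos.2 h) .τ₀ 0], ?_⟩
    rw [semMoves_adv_singleton _ hsw]
    exact ⟨h₀, h₁, potential_swapSem_adv hpr₀ hpr₁ hsw, swapSem_mempool hsw,
      swapSem_wal_of_adv hsw⟩
  · refine ⟨[], h, ?_, rfl, rfl, rfl⟩
    rw [h] at hprod
    exact (mul_left_cancel₀ hB₀.ne' hprod).symm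
  · have h' : (σ.s.bal .τ₁ : ℝ) < B₁ := by nlinarith
    obtain ⟨σ', hsw, h₁, h₀⟩ := exists_swapSem_adv_bal_eq (τ := .τ₁) hb₁ hb₀ h'
      (by rw [mul_comm]; exact hprod.trans (mul_comm _ _))
    refine ⟨[.adv _ (sub_pos.2 h') .τ₁ 0], ?_⟩
    rw [semMoves_adv_singleton _ hsw]
    exact ⟨h₀, h₁, potential_swapSem_adv hpr₀ hpr₁ hsw, swapSem_mempool hsw,
      swapSem_wal_of_adv hsw⟩

lemma exists_semMoves_extractable_eq_zero (hpr₀ : 0 < pr₀) (hpr₁ : 0 < pr₁) (σ : AMMSys)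
    (hb₀ : (0 : ℝ) < σ.s.bal .τ₀) (hb₁ : (0 : ℝ) < σ.s.bal .τ₁) :
    ∃ tr, extractable pr₀ pr₁ (semMoves σ tr) = 0 ∧
      potential pr₀ pr₁ (semMoves σ tr) = potential pr₀ pr₁ σ := by
  obtain ⟨tr, h₀, h₁, hpot, -, -⟩ := exists_semMoves_bal_eq hpr₀.le hpr₁.le σ hb₀ hb₁
    (Real.sqrt_pos.2 (by positivity))
    (sqrt_balanced_mul_sqrt_balanced hpr₀ hpr₁ (mul_pos hb₀ hb₁).le)
  exact ⟨tr, extractable_eq_zero (by rw [h₀, h₁]; exact mul_sqrt_balanced_comm hpr₀ hpr₁ _ _),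
    hpot⟩

/-- The sandwich attack: front-run to the reserves `(B₀, B₁)`, execute the honest swap,
back-run to the balanced state. -/
lemma exists_gainMoves_eq_of_bal_eq (hpr₀ : 0 < pr₀) (hpr₁ : 0 < pr₁) {σ : AMMSys}
    (hb₀ : (0 : ℝ) < σ.s.bal .τ₀) (hb₁ : (0 : ℝ) < σ.s.bal .τ₁) {id : TxId} {tx : Tx}
    (hmp : σ.s.mempool = [(id, tx)]) (hτ : tx.τ = .τ₀) (hvmin : tx.vmin = 0)
    (hhon : tx.P ≠ .Adv) (howns : tx.v ≤ (σ.s.wal .τ₀ : ℝ)) {B₀ B₁ : ℝ} (hB₀ : 0 < B₀)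
    (hB₁ : 0 < B₁) (hprod : B₀ * B₁ = σ.s.bal .τ₀ * σ.s.bal .τ₁) :
    ∃ tr, gainMoves pr₀ pr₁ σ tr
      = extractable pr₀ pr₁ σ + pr₀ * tx.v - pr₁ * (tx.v * B₁ / (B₀ + tx.v)) := by
  obtain ⟨tr₁, h₀, h₁, hpot₁, hmp₁, hwal₁⟩ :=
    exists_semMoves_bal_eq hpr₀.le hpr₁.le σ hb₀ hb₁ hB₀ hprod
  obtain ⟨σ₂, hsw⟩ := Option.ne_none_iff_exists'.mp
    (swapSem_ne_none (τin := .τ₀) tx.v_pos (Or.inr (hwal₁ ▸ howns))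
      (hvmin ▸ swapOut_nonneg tx.v_pos.le) (h₀.symm ▸ hB₀) (h₁.symm ▸ hB₁))
  have hm := semMove_mempool_eq_some (hmp₁.trans hmp) (hτ ▸ hsw)
  set σ₃ : AMMSys := ⟨σ₂.Δ, ⟨σ₂.s.bal, σ₂.s.wal, []⟩⟩
  have hpot₂ : potential pr₀ pr₁ σ₃ = potential pr₀ pr₁ σ₂ := rfl
  obtain ⟨tr₃, hext, hpot₃⟩ := exists_semMoves_extractable_eq_zero hpr₀ hpr₁ σ₃
    (swapSem_bal_pos hsw _) (swapSem_bal_pos hsw _)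
  refine ⟨tr₁ ++ .mempool id :: tr₃, ?_⟩
  rw [gainMoves_eq, semMoves_append, semMoves_cons_of_semMove_eq_some hm, hext, hpot₃,
    hpot₂, potential_swapSem_of_ne_adv hpr₀.le hpr₁.le hhon hsw,
    hpot₁, swapOut, Token.other, h₀, h₁]
  ring

end Rebalance

open Filter in
lemma exists_pos_div_mul_le (C a v : ℝ) {ε : ℝ} (hε : 0 < ε) :
    ∃ x > 0, C / ((a + x + v) * (a + x)) ≤ ε := by
  have ha : Tendsto (fun x : ℝ => a + x) atTop atTop :=
    tendsto_atTop_add_const_left _ a tendsto_id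
  have hden := (tendsto_atTop_add_const_right _ v ha).atTop_mul_atTop₀ ha
  have := (hden.const_div_atTop C).eventually (ge_mem_nhds hε)
  exact ((eventually_gt_atTop 0).and this).exists

lemma MEV.eq_of_MEVsup {pr₀ pr₁ : ℝ} {σ : AMMSys} {u w : ℝ} (h : MEV pr₀ pr₁ σ u)
    (h' : MEVsup pr₀ pr₁ σ w) : u = w := by
  obtain ⟨tr, htr⟩ := h.trace_reaches_v
  refine le_antisymm (htr ▸ h'.other_traces_worse tr) (le_of_forall_pos_le_add fun ε hε => ?_)
  obtain ⟨tr', htr'⟩ := h'.traces_approx ε hε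
  linarith [h.other_traces_worse tr']

/-- If the mempool contains exactly one honest swap of `v > 0` units of τ₀ with
minimum-output constraint `vmin = 0` (and the honest sender owns the `v` units),
then the adversary can gain arbitrarily close to `extractable σ + v·pr₀`;
consequently `MEVsup σ (extractable σ + v·pr₀)` holds while the MEV does not
exist at `σ`. Moreover, for every `x > 0` there is a witnessing trace
(balance the AMM, adversary-swap `x` units of τ₀ in, execute the mempool
transaction, re-balance) whose gain is
`extractable σ + pr₀·v − pr₁·b̄₀·b̄₁·v / ((b̄₀+x+v)·(b̄₀+x))`,
where `(b̄₀, b̄₁)` are the balanced reserves. -/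
theorem MEVsup_singleton_vmin_zero (pr₀ pr₁ : ℝ)
    (hpr₀ : 0 < pr₀) (hpr₁ : 0 < pr₁) (σ : AMMSys)
    (hb₀ : 0 < σ.s.bal .τ₀) (hb₁ : 0 < σ.s.bal .τ₁)
    (id : TxId) (tx : Tx)
    (hmp : σ.s.mempool = [(id, tx)])
    (hτ : tx.τ = .τ₀) (hvmin : tx.vmin = 0) (hhon : tx.P ≠ .Adv)
    (howns : tx.v ≤ (σ.s.wal .τ₀ : ℝ)) :
    -- the balanced reserves:
    let b₀ : ℝ := σ.s.bal .τ₀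
    let b₁ : ℝ := σ.s.bal .τ₁
    let bbar₀ : ℝ := Real.sqrt (pr₁ * b₀ * b₁ / pr₀)
    let bbar₁ : ℝ := Real.sqrt (pr₀ * b₀ * b₁ / pr₁)
    -- traces gaining arbitrarily close to the bound
    (∀ ε : ℝ, 0 < ε → ∃ tr : List Move,
      extractable pr₀ pr₁ σ + tx.v * pr₀ ≤ gainMoves pr₀ pr₁ σ tr + ε) ∧
    -- MEVsup holds with that bound
    MEVsup pr₀ pr₁ σ (extractable pr₀ pr₁ σ + tx.v * pr₀) ∧
    -- but MEV does not exist
    (¬ ∃ v : ℝ, MEV pr₀ pr₁ σ v) ∧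
    -- the witnessing trace, parameterised by x > 0, and its exact gain
    (∀ x : ℝ, 0 < x → ∃ tr : List Move,
      gainMoves pr₀ pr₁ σ tr
        = extractable pr₀ pr₁ σ + pr₀ * tx.v
          - pr₁ * bbar₀ * bbar₁ * tx.v / ((bbar₀ + x + tx.v) * (bbar₀ + x))) := by
  intro b₀ b₁ bbar₀ bbar₁
  have hbbar₀ : 0 < bbar₀ := Real.sqrt_pos.2 (by positivity)
  have hbbar₁ : 0 < bbar₁ := Real.sqrt_pos.2 (by positivity)
  have hbbar : bbar₀ * bbar₁ = b₀ * b₁ :=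
    sqrt_balanced_mul_sqrt_balanced hpr₀ hpr₁ (by positivity)
  have hwitness : ∀ x : ℝ, 0 < x → ∃ tr : List Move, gainMoves pr₀ pr₁ σ tr
      = extractable pr₀ pr₁ σ + pr₀ * tx.v
        - pr₁ * bbar₀ * bbar₁ * tx.v / ((bbar₀ + x + tx.v) * (bbar₀ + x)) := by
    intro x hx
    obtain ⟨tr, htr⟩ := exists_gainMoves_eq_of_bal_eq hpr₀ hpr₁ hb₀ hb₁ hmp hτ hvmin hhon howns
      (B₀ := bbar₀ + x) (B₁ := bbar₀ * bbar₁ / (bbar₀ + x)) (by positivity) (by positivity)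
      (by field_simp; exact hbbar)
    exact ⟨tr, htr.trans (by field_simp)⟩
  have hlt := gainMoves_lt hpr₀ hpr₁ hτ hhon hmp
  have happrox (ε : ℝ) (hε : 0 < ε) : ∃ tr : List Move,
      extractable pr₀ pr₁ σ + tx.v * pr₀ ≤ gainMoves pr₀ pr₁ σ tr + ε := by
    obtain ⟨x, hx, hsmall⟩ := exists_pos_div_mul_le (pr₁ * bbar₀ * bbar₁ * tx.v) bbar₀ tx.v hε
    obtain ⟨tr, htr⟩ := hwitness x hx
    exact ⟨tr, by rw [htr]; linarith⟩
  have hsup : MEVsup pr₀ pr₁ σ (extractable pr₀ pr₁ σ + tx.v * pr₀) :=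
    ⟨happrox, fun tr => (hlt tr).le⟩
  refine ⟨happrox, hsup, fun ⟨u, hu⟩ => ?_, hwitness⟩
  obtain ⟨tr, htr⟩ := hu.trace_reaches_v
  exact (hlt tr).ne (htr.trans (hu.eq_of_MEVsup hsup))
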